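/- Fix k ∈ ℕ^n with k ≠ 0, continuous r, intensity matrix M and continuous payments as in the setup. Suppose the matrix-valued functions V^{(y)}(·,t), y ∈ S̃(k), satisfy the backward matrix moment ODE system with terminal conditions V^{(y)}(t,t) = 𝟙(y=0)·Id. Then V^{(k)} has the integral representation V^{(k)}(s,t) = ∑_{ℓ=1}^n k_ℓ ∫_s^t ∏_s^x ( Id + [M(u) − k̄ r(u) Id] du ) R_ℓ(x) V^{(k−e_ℓ)}(x,t) dx + ∑_{y ∈ S(k), y ∉ E_n} ( ∏_ℓ C(k_ℓ, y_ℓ) ) ∫_s^t ∏_s^x ( Id + [M(u) − k̄ r(u) Id] du ) C^{(y)}(x) V^{(k−y)}(x,t) dx, where ∏_s^x denotes the product integral (Peano–Baker series). -/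

import Mathlib

/-! The product integral `P(x) = ∏_s^x (Id + A(u) du)` with `A = M − k̄ r Id` solves the forward
equation `∂ₓ P = P A`, `P(s) = Id`: differentiate the Peano–Baker series termwise, its `m`-th
term being bounded by `(K |x − s|)^m / m!`. The moment ODE for `V^{(k)}` reads `∂ₓ V = −A V − F`
with `F` collecting the lower-order moments, so `∂ₓ (P V) = −P F`. Integrating over `[s, t]` and
using `V^{(k)}(t,t) = 0` (as `k ≠ 0`) gives `V^{(k)}(s,t) = ∫_s^t P F`, and expanding `F` gives
the two sums. -/

open MeasureTheory intervalIntegral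

attribute [local instance] Matrix.linftyOpNormedAddCommGroup Matrix.linftyOpNormedSpace
  Matrix.linftyOpNormedRing Matrix.linftyOpNormedAlgebra

/-- Iterated integrals of the Peano-Baker series:
`I_0(s,t) = Id`, `I_{m+1}(s,t) = int_s^t I_m(s,x) A(x) dx`. -/
noncomputable def iterInt {ι : Type*} [Fintype ι] [DecidableEq ι]
    (A : ℝ → Matrix ι ι ℝ) : ℕ → ℝ → ℝ → Matrix ι ι ℝ
  | 0, _s, _t => 1
  | m + 1, s, t => ∫ x in s..t, iterInt A m s x * A x

/-- The Peano-Baker series (product integral) of `A` over `(s,t]`. -/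
noncomputable def peanoBaker {ι : Type*} [Fintype ι] [DecidableEq ι]
    (A : ℝ → Matrix ι ι ℝ) (s t : ℝ) : Matrix ι ι ℝ :=
  ∑' m : ℕ, iterInt A m s t

/-- The intensity matrix `M(s)` with off-diagonal entries `μ_{ij}(s)` and diagonal
entries `−∑_{j≠i} μ_{ij}(s)`. -/
noncomputable def intensity {J : ℕ} (μ : Fin J → Fin J → ℝ → ℝ) (s : ℝ) :
    Matrix (Fin J) (Fin J) ℝ :=
  Matrix.of fun i j => if i = j then -(∑ j' ∈ Finset.univ.erase i, μ i j' s) else μ i j s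

/-- The matrix `B_ℓ(s) = {b^ℓ_{ij}(s)}_{i,j}` of transition payments. -/
def Bmat {J n : ℕ} (bt : Fin n → Fin J → Fin J → ℝ → ℝ) (ℓ : Fin n) (s : ℝ) :
    Matrix (Fin J) (Fin J) ℝ :=
  Matrix.of fun i j => bt ℓ i j s

/-- `R_ℓ(s) = M(s) ∘ B_ℓ(s) + Δ(b^ℓ(s))` (Hadamard product plus diagonal of sojourn rates). -/
noncomputable def Rmat {J n : ℕ} (μ : Fin J → Fin J → ℝ → ℝ)
    (bt : Fin n → Fin J → Fin J → ℝ → ℝ) (bs : Fin n → Fin J → ℝ → ℝ)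
    (ℓ : Fin n) (s : ℝ) : Matrix (Fin J) (Fin J) ℝ :=
  Matrix.hadamard (intensity μ s) (Bmat bt ℓ s) + Matrix.diagonal (fun i => bs ℓ i s)

/-- `C^{(y)}(s) = M(s) ∘ B₁(s)^{∘y₁} ∘ ⋯ ∘ Bₙ(s)^{∘yₙ}`. -/
noncomputable def Cmat {J n : ℕ} (μ : Fin J → Fin J → ℝ → ℝ)
    (bt : Fin n → Fin J → Fin J → ℝ → ℝ) (y : Fin n → ℕ) (s : ℝ) :
    Matrix (Fin J) (Fin J) ℝ :=
  Matrix.hadamard (intensity μ s) (Matrix.of fun i j => ∏ ℓ, (bt ℓ i j s) ^ (y ℓ))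

/-- The set of nonzero multi-indices componentwise below `x`. -/
def Sfin {n : ℕ} (x : Fin n → ℕ) : Finset (Fin n → ℕ) := (Finset.Iic x).erase 0

/-- `S̃(x) = S(x) ∪ {0}`, i.e. all multi-indices componentwise below `x`. -/
def Stil {n : ℕ} (x : Fin n → ℕ) : Finset (Fin n → ℕ) := Finset.Iic x

/-- The matrix `A(s,u;θ) = M(u) ∘ {exp(v(s,u)⟨θ,b_{ij}(u)⟩)}_{ij} + v(s,u) ∑_ℓ θ_ℓ Δ(b^ℓ(u))`,
where `v(s,u) = exp(−∫_s^u r)`. -/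
noncomputable def Amat {J n : ℕ} (r : ℝ → ℝ) (μ : Fin J → Fin J → ℝ → ℝ)
    (bt : Fin n → Fin J → Fin J → ℝ → ℝ) (bs : Fin n → Fin J → ℝ → ℝ)
    (s u : ℝ) (θ : Fin n → ℝ) : Matrix (Fin J) (Fin J) ℝ :=
  Matrix.of (fun i j => intensity μ u i j *
      Real.exp (Real.exp (-∫ x in s..u, r x) * ∑ ℓ, θ ℓ * bt ℓ i j u))
    + Real.exp (-∫ x in s..u, r x) • ∑ ℓ, θ ℓ • Matrix.diagonal (fun i => bs ℓ i u)

/-- The right-hand side of the backward matrix moment ODE system: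
`(ȳ r(s) Id − M(s)) V^{(y)} − ∑_ℓ y_ℓ R_ℓ(s) V^{(y−e_ℓ)}
  − ∑_{ξ ∈ S(y), ξ ∉ E_n} (∏_ℓ C(y_ℓ,ξ_ℓ)) C^{(ξ)}(s) V^{(y−ξ)}`,
as (−1) times the `s`-derivative, i.e. this is exactly `∂/∂s V^{(y)}(s,t)`. -/
noncomputable def momentRHS {J n : ℕ} (r : ℝ → ℝ) (μ : Fin J → Fin J → ℝ → ℝ)
    (bt : Fin n → Fin J → Fin J → ℝ → ℝ) (bs : Fin n → Fin J → ℝ → ℝ)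
    (V : (Fin n → ℕ) → ℝ → Matrix (Fin J) (Fin J) ℝ)
    (y : Fin n → ℕ) (s : ℝ) : Matrix (Fin J) (Fin J) ℝ :=
  ((∑ ℓ, (y ℓ : ℝ)) * r s) • V y s - intensity μ s * V y s
    - ∑ ℓ, (y ℓ : ℝ) • (Rmat μ bt bs ℓ s * V (y - Pi.single ℓ 1) s)
    - ∑ ξ ∈ (Sfin y).filter (fun ξ => ¬ ∃ ℓ, ξ = Pi.single ℓ 1),
        (∏ ℓ, ((y ℓ).choose (ξ ℓ) : ℝ)) • (Cmat μ bt ξ s * V (y - ξ) s)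

section PeanoBaker

open Set
open scoped Interval

variable {ι : Type*} [Fintype ι] [DecidableEq ι] {A : ℝ → Matrix ι ι ℝ}

lemma Matrix.linfty_opNorm_one_le : ‖(1 : Matrix ι ι ℝ)‖ ≤ 1 := by
  rw [← Matrix.diagonal_one, Matrix.linfty_opNorm_diagonal]
  exact (pi_norm_le_iff_of_nonneg zero_le_one).2 fun i => by simp

lemma continuous_iterInt (hA : Continuous A) (m : ℕ) (s : ℝ) :
    Continuous (iterInt A m s) := by
  induction m with
  | zero => exact continuous_const
  | succ m ih => exact continuous_primitive (fun a b => (ih.mul hA).intervalIntegrable a b) s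

lemma hasDerivAt_iterInt_succ (hA : Continuous A) (m : ℕ) (s x : ℝ) :
    HasDerivAt (iterInt A (m + 1) s) (iterInt A m s x * A x) x :=
  ((continuous_iterInt hA m s).mul hA).integral_hasStrictDerivAt s x |>.hasDerivAt

lemma norm_iterInt_le (hA : Continuous A) {K s x : ℝ} (hK : ∀ y ∈ uIcc s x, ‖A y‖ ≤ K)
    (m : ℕ) : ‖iterInt A m s x‖ ≤ (K * |x - s|) ^ m / m.factorial := by
  have hK0 : 0 ≤ K := (norm_nonneg _).trans (hK s left_mem_uIcc)
  induction m generalizing x with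
  | zero => simpa [iterInt] using Matrix.linfty_opNorm_one_le
  | succ m ih =>
    have hbound : ∀ y ∈ Ι s x,
        ‖iterInt A m s y * A y‖ ≤ K ^ (m + 1) / m.factorial * |y - s| ^ m := by
      intro y hy
      have hsy : uIcc s y ⊆ uIcc s x := uIcc_subset_uIcc_left (uIoc_subset_uIcc hy)
      calc ‖iterInt A m s y * A y‖ ≤ ‖iterInt A m s y‖ * ‖A y‖ := norm_mul_le _ _
        _ ≤ (K * |y - s|) ^ m / m.factorial * K := by
            gcongr
            exacts [ih fun z hz => hK z (hsy hz), hK y (hsy right_mem_uIcc)]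
        _ = K ^ (m + 1) / m.factorial * |y - s| ^ m := by ring
    calc ‖iterInt A (m + 1) s x‖ ≤ ∫ y in Ι s x, ‖iterInt A m s y * A y‖ :=
          norm_integral_le_integral_norm_uIoc
      _ ≤ ∫ y in Ι s x, K ^ (m + 1) / m.factorial * |y - s| ^ m :=
          setIntegral_mono_on ((continuous_iterInt hA m s).mul hA).norm.integrableOn_uIoc
            (Continuous.integrableOn_uIoc (by fun_prop)) measurableSet_uIoc hbound
      _ = (K * |x - s|) ^ (m + 1) / (m + 1).factorial := by
          rw [MeasureTheory.integral_const_mul, integral_pow_abs_sub_uIoc, Nat.factorial_succ]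
          push_cast
          field_simp
          ring

lemma summable_iterInt (hA : Continuous A) (s x : ℝ) :
    Summable fun m => iterInt A m s x := by
  obtain ⟨K, hK⟩ := (isCompact_uIcc : IsCompact (uIcc s x)).exists_bound_of_continuousOn
    hA.continuousOn
  exact .of_norm_bounded (Real.summable_pow_div_factorial _) (norm_iterInt_le hA hK)

lemma peanoBaker_self (A : ℝ → Matrix ι ι ℝ) (s : ℝ) : peanoBaker A s s = 1 := by
  rw [peanoBaker, tsum_eq_single 0]
  · rfl
  · rintro (_ | m) hm
    · exact absurd rfl hm
    · exact integral_same

lemma peanoBaker_eq_one_add (hA : Continuous A) (s : ℝ) :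
    peanoBaker A s = fun x => 1 + ∑' m, iterInt A (m + 1) s x := by
  ext1 x
  exact (summable_iterInt hA s x).tsum_eq_zero_add

lemma hasDerivAt_peanoBaker (hA : Continuous A) (s x : ℝ) :
    HasDerivAt (peanoBaker A s) (peanoBaker A s x * A x) x := by
  set R := |x - s| + 1
  have hR0 : 0 < R := by positivity
  obtain ⟨K, hK⟩ := (isCompact_Icc : IsCompact (Icc (s - R) (s + R))).exists_bound_of_continuousOn
    hA.continuousOn
  have hR : ∀ y ∈ Ioo (s - R) (s + R), |y - s| ≤ R := fun y hy =>
    (abs_sub_lt_iff.2 ⟨by linarith [hy.2], by linarith [hy.1]⟩).le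
  have hbound : ∀ m, ∀ y ∈ Ioo (s - R) (s + R),
      ‖iterInt A m s y * A y‖ ≤ (K * R) ^ m / m.factorial * K := by
    intro m y hy
    have hsub : uIcc s y ⊆ Icc (s - R) (s + R) :=
      uIcc_subset_Icc ⟨by linarith, by linarith⟩ (Ioo_subset_Icc_self hy)
    have hK0 : 0 ≤ K := (norm_nonneg _).trans (hK y (hsub right_mem_uIcc))
    calc ‖iterInt A m s y * A y‖ ≤ ‖iterInt A m s y‖ * ‖A y‖ := norm_mul_le _ _
      _ ≤ (K * |y - s|) ^ m / m.factorial * K := by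
          gcongr
          exacts [norm_iterInt_le hA (fun z hz => hK z (hsub hz)) m, hK y (hsub right_mem_uIcc)]
      _ ≤ (K * R) ^ m / m.factorial * K := by gcongr; exact hR y hy
  have hs : s ∈ Ioo (s - R) (s + R) := ⟨by linarith, by linarith⟩
  have hx : x ∈ Ioo (s - R) (s + R) :=
    ⟨by linarith [neg_abs_le (x - s)], by linarith [le_abs_self (x - s)]⟩
  have hseries := hasDerivAt_tsum_of_isPreconnected
    ((Real.summable_pow_div_factorial _).mul_right K) isOpen_Ioo isPreconnected_Ioo
    (fun m y _ => hasDerivAt_iterInt_succ hA m s y) hbound hs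
    ((summable_nat_add_iff 1).2 (summable_iterInt hA s s)) hx
  have hvalue : peanoBaker A s x * A x = ∑' m, iterInt A m s x * A x :=
    ((summable_iterInt hA s x).tsum_mul_right (A x)).symm
  rw [hvalue, peanoBaker_eq_one_add hA]
  exact hseries.const_add 1

lemma continuous_peanoBaker (hA : Continuous A) (s : ℝ) : Continuous (peanoBaker A s) :=
  continuous_iff_continuousAt.2 fun x => (hasDerivAt_peanoBaker hA s x).continuousAt

end PeanoBaker

section VariationOfConstants

open Set

variable {𝔸 : Type*} [NormedRing 𝔸] [NormedAlgebra ℝ 𝔸] [CompleteSpace 𝔸]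

theorem mul_eq_mul_add_integral_of_hasDerivAt {P V F A : ℝ → 𝔸} {s t : ℝ}
    (hP : ∀ x ∈ uIcc s t, HasDerivAt P (P x * A x) x)
    (hV : ∀ x ∈ uIcc s t, HasDerivAt V (-(A x * V x) - F x) x)
    (hPF : IntervalIntegrable (fun x => P x * F x) volume s t) :
    P s * V s = P t * V t + ∫ x in s..t, P x * F x := by
  have hPV : ∀ x ∈ uIcc s t, HasDerivAt (fun y => P y * V y) (-(P x * F x)) x := fun x hx =>
    ((hP x hx).mul (hV x hx)).congr_deriv (by simp only [mul_sub, mul_neg, mul_assoc]; abel)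
  have hFTC := integral_eq_sub_of_hasDerivAt hPV hPF.neg
  rw [intervalIntegral.integral_neg, neg_eq_iff_eq_neg] at hFTC
  rw [hFTC]
  abel

end VariationOfConstants

lemma intervalIntegral.integral_finsetSum_smul {E ι : Type*} [NormedAddCommGroup E]
    [NormedSpace ℝ E] (S : Finset ι) (c : ι → ℝ) {f : ι → ℝ → E} {a b : ℝ}
    (hf : ∀ i ∈ S, IntervalIntegrable (f i) volume a b) :
    ∫ x in a..b, ∑ i ∈ S, c i • f i x = ∑ i ∈ S, c i • ∫ x in a..b, f i x := by
  rw [integral_finsetSum (f := fun i x => c i • f i x) fun i hi => (hf i hi).smul (c i)]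
  simp only [integral_smul]

lemma eq_integral_peanoBaker_mul {ι : Type*} [Fintype ι] [DecidableEq ι]
    {A W F : ℝ → Matrix ι ι ℝ} {s t : ℝ} (hA : Continuous A) (hst : s ≤ t)
    (hW : ∀ x ∈ Set.Icc s t, HasDerivAt W (-(A x * W x) - F x) x)
    (hF : ContinuousOn F (Set.Icc s t)) (hWt : W t = 0) :
    W s = ∫ x in s..t, peanoBaker A s x * F x := by
  have key := mul_eq_mul_add_integral_of_hasDerivAt (fun x _ => hasDerivAt_peanoBaker hA s x)
    (by rwa [Set.uIcc_of_le hst]) ?_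
  · rwa [peanoBaker_self, one_mul, hWt, mul_zero, zero_add] at key
  · exact ((continuous_peanoBaker hA s).continuousOn.mul hF).intervalIntegrable_of_Icc hst

section MarkovModel

variable {J n : ℕ} {μ : Fin J → Fin J → ℝ → ℝ} {bt : Fin n → Fin J → Fin J → ℝ → ℝ}
  {bs : Fin n → Fin J → ℝ → ℝ}

lemma continuous_intensity (hμ : ∀ i j, Continuous (μ i j)) : Continuous (intensity μ) :=
  continuous_matrix fun i j => by
    simp only [intensity, Matrix.of_apply]
    split_ifs <;> fun_prop

lemma continuous_Rmat (hμ : ∀ i j, Continuous (μ i j)) (hbt : ∀ ℓ i j, Continuous (bt ℓ i j))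
    (hbs : ∀ ℓ i, Continuous (bs ℓ i)) (ℓ : Fin n) : Continuous (Rmat μ bt bs ℓ) :=
  continuous_matrix fun i j => by
    have := continuous_intensity hμ
    simp only [Rmat, Bmat, Matrix.add_apply, Matrix.hadamard_apply, Matrix.of_apply,
      Matrix.diagonal_apply]
    split_ifs <;> fun_prop

lemma continuous_Cmat (hμ : ∀ i j, Continuous (μ i j)) (hbt : ∀ ℓ i j, Continuous (bt ℓ i j))
    (y : Fin n → ℕ) : Continuous (Cmat μ bt y) :=
  continuous_matrix fun i j => by
    have := continuous_intensity hμ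
    simp only [Cmat, Matrix.hadamard_apply, Matrix.of_apply]
    fun_prop

noncomputable def momentForcing (μ : Fin J → Fin J → ℝ → ℝ) (bt : Fin n → Fin J → Fin J → ℝ → ℝ)
    (bs : Fin n → Fin J → ℝ → ℝ) (V : (Fin n → ℕ) → ℝ → Matrix (Fin J) (Fin J) ℝ)
    (y : Fin n → ℕ) (x : ℝ) : Matrix (Fin J) (Fin J) ℝ :=
  (∑ ℓ, (y ℓ : ℝ) • (Rmat μ bt bs ℓ x * V (y - Pi.single ℓ 1) x))
    + ∑ ξ ∈ (Sfin y).filter (fun ξ => ¬ ∃ ℓ, ξ = Pi.single ℓ 1),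
        (∏ ℓ, ((y ℓ).choose (ξ ℓ) : ℝ)) • (Cmat μ bt ξ x * V (y - ξ) x)

lemma momentRHS_eq (r : ℝ → ℝ) (V : (Fin n → ℕ) → ℝ → Matrix (Fin J) (Fin J) ℝ)
    (y : Fin n → ℕ) (x : ℝ) :
    momentRHS r μ bt bs V y x
      = -((intensity μ x - ((∑ ℓ, (y ℓ : ℝ)) * r x) • 1) * V y x)
        - momentForcing μ bt bs V y x := by
  simp only [momentRHS, momentForcing, sub_mul, smul_mul_assoc, one_mul]
  abel

variable {V : (Fin n → ℕ) → ℝ → Matrix (Fin J) (Fin J) ℝ} {y : Fin n → ℕ}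

lemma continuousOn_momentForcing (hμ : ∀ i j, Continuous (μ i j))
    (hbt : ∀ ℓ i j, Continuous (bt ℓ i j)) (hbs : ∀ ℓ i, Continuous (bs ℓ i)) {S : Set ℝ}
    (hV : ∀ ξ, ContinuousOn (V (y - ξ)) S) : ContinuousOn (momentForcing μ bt bs V y) S := by
  refine .add (continuousOn_finsetSum _ fun ℓ _ => .fun_const_smul ?_ _)
    (continuousOn_finsetSum _ fun ξ _ => .fun_const_smul ?_ _)
  · exact (continuous_Rmat hμ hbt hbs ℓ).continuousOn.mul (hV _)
  · exact (continuous_Cmat hμ hbt ξ).continuousOn.mul (hV ξ)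

lemma integral_mul_momentForcing (hμ : ∀ i j, Continuous (μ i j))
    (hbt : ∀ ℓ i j, Continuous (bt ℓ i j)) (hbs : ∀ ℓ i, Continuous (bs ℓ i))
    {P : ℝ → Matrix (Fin J) (Fin J) ℝ} (hP : Continuous P) {s t : ℝ} (hst : s ≤ t)
    (hV : ∀ ξ, ContinuousOn (V (y - ξ)) (Set.Icc s t)) :
    ∫ x in s..t, P x * momentForcing μ bt bs V y x
      = (∑ ℓ, (y ℓ : ℝ) • ∫ x in s..t, P x * Rmat μ bt bs ℓ x * V (y - Pi.single ℓ 1) x)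
        + ∑ ξ ∈ (Sfin y).filter (fun ξ => ¬ ∃ ℓ, ξ = Pi.single ℓ 1),
            (∏ ℓ, ((y ℓ).choose (ξ ℓ) : ℝ)) • ∫ x in s..t, P x * Cmat μ bt ξ x * V (y - ξ) x := by
  have hterm : ∀ (G : ℝ → Matrix (Fin J) (Fin J) ℝ) (ξ : Fin n → ℕ), Continuous G →
      ContinuousOn (fun x => P x * G x * V (y - ξ) x) (Set.Icc s t) :=
    fun G ξ hG => (hP.mul hG).continuousOn.mul (hV ξ)
  have hR := fun ℓ => hterm _ (Pi.single ℓ 1) (continuous_Rmat hμ hbt hbs ℓ)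
  have hC := fun ξ => hterm _ ξ (continuous_Cmat hμ hbt ξ)
  simp only [momentForcing, mul_add, Finset.mul_sum, Matrix.mul_smul, ← mul_assoc]
  rw [intervalIntegral.integral_add, intervalIntegral.integral_finsetSum_smul,
    intervalIntegral.integral_finsetSum_smul]
  · exact fun ξ _ => (hC ξ).intervalIntegrable_of_Icc hst
  · exact fun ℓ _ => (hR ℓ).intervalIntegrable_of_Icc hst
  · exact (continuousOn_finsetSum _ fun ℓ _ => (hR ℓ).fun_const_smul _)
      |>.intervalIntegrable_of_Icc hst
  · exact (continuousOn_finsetSum _ fun ξ _ => (hC ξ).fun_const_smul _)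
      |>.intervalIntegrable_of_Icc hst

end MarkovModel

theorem moment_integral_representation_general {J n : ℕ} (r : ℝ → ℝ) (μ : Fin J → Fin J → ℝ → ℝ)
    (bt : Fin n → Fin J → Fin J → ℝ → ℝ) (bs : Fin n → Fin J → ℝ → ℝ)
    (hr : Continuous r)
    (hμc : ∀ i j, Continuous (μ i j))
    (hbtc : ∀ ℓ i j, Continuous (bt ℓ i j))
    (hbsc : ∀ ℓ i, Continuous (bs ℓ i))
    (t : ℝ) (k : Fin n → ℕ) (hk : k ≠ 0)
    (V : (Fin n → ℕ) → ℝ → Matrix (Fin J) (Fin J) ℝ)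
    (hode : ∀ y ∈ Stil k, ∀ s : ℝ, s ≤ t →
      HasDerivAt (V y) (momentRHS r μ bt bs V y s) s)
    (hterm : ∀ y ∈ Stil k, V y t = if y = 0 then 1 else 0) :
    ∀ s : ℝ, s ≤ t →
      V k s
        = (∑ ℓ, (k ℓ : ℝ) •
            ∫ x in s..t,
              peanoBaker (fun u => intensity μ u
                  - ((∑ ℓ', (k ℓ' : ℝ)) * r u) • (1 : Matrix (Fin J) (Fin J) ℝ)) s x
                * Rmat μ bt bs ℓ x * V (k - Pi.single ℓ 1) x)
          + ∑ y ∈ (Sfin k).filter (fun y => ¬ ∃ ℓ, y = Pi.single ℓ 1),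
              (∏ ℓ, ((k ℓ).choose (y ℓ) : ℝ)) •
                ∫ x in s..t,
                  peanoBaker (fun u => intensity μ u
                      - ((∑ ℓ', (k ℓ' : ℝ)) * r u) • (1 : Matrix (Fin J) (Fin J) ℝ)) s x
                    * Cmat μ bt y x * V (k - y) x := by
  intro s hst
  set A := fun u => intensity μ u - ((∑ ℓ', (k ℓ' : ℝ)) * r u) • (1 : Matrix (Fin J) (Fin J) ℝ)
  have hA : Continuous A := by have := continuous_intensity hμc; fun_prop
  have hk_mem : k ∈ Stil k := Finset.mem_Iic.2 le_rfl
  have hV : ∀ ξ : Fin n → ℕ, ContinuousOn (V (k - ξ)) (Set.Icc s t) := fun ξ x hx =>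
    (hode _ (Finset.mem_Iic.2 tsub_le_self) x hx.2).continuousAt.continuousWithinAt
  rw [eq_integral_peanoBaker_mul (W := V k) hA hst
      (fun x hx => momentRHS_eq r V k x ▸ hode k hk_mem x hx.2)
      (continuousOn_momentForcing hμc hbtc hbsc hV) (by rw [hterm k hk_mem, if_neg hk]),
    integral_mul_momentForcing hμc hbtc hbsc (continuous_peanoBaker hA s) hst hV]

/-- if the matrix partial moments `V^{(y)}(·,t)`, `y ∈ S̃(k)`, satisfy the
backward matrix moment ODE system with terminal conditions, then `V^{(k)}` has the
integral representation
`V^{(k)}(s,t) = ∑_ℓ k_ℓ ∫_s^t ∏_s^x (Id + [M−k̄ r Id]du) R_ℓ(x) V^{(k−e_ℓ)}(x,t) dx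
 + ∑_{y ∈ S(k)\E_n} (∏_ℓ C(k_ℓ,y_ℓ)) ∫_s^t ∏_s^x (Id + [M−k̄ r Id]du) C^{(y)}(x) V^{(k−y)}(x,t) dx`. -/
theorem moment_integral_representation {J n : ℕ} (r : ℝ → ℝ) (μ : Fin J → Fin J → ℝ → ℝ)
    (bt : Fin n → Fin J → Fin J → ℝ → ℝ) (bs : Fin n → Fin J → ℝ → ℝ)
    (hr : Continuous r)
    (hμc : ∀ i j, Continuous (μ i j))
    (hμ0 : ∀ i j, i ≠ j → ∀ s, 0 ≤ μ i j s)
    (hbtc : ∀ ℓ i j, Continuous (bt ℓ i j))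
    (hbsc : ∀ ℓ i, Continuous (bs ℓ i))
    (hbt0 : ∀ ℓ i s, bt ℓ i i s = 0)
    (t : ℝ) (k : Fin n → ℕ) (hk : k ≠ 0)
    (V : (Fin n → ℕ) → ℝ → Matrix (Fin J) (Fin J) ℝ)
    (hode : ∀ y ∈ Stil k, ∀ s : ℝ, s ≤ t →
      HasDerivAt (V y) (momentRHS r μ bt bs V y s) s)
    (hterm : ∀ y ∈ Stil k, V y t = if y = 0 then 1 else 0) :
    ∀ s : ℝ, s ≤ t →
      V k s
        = (∑ ℓ, (k ℓ : ℝ) •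
            ∫ x in s..t,
              peanoBaker (fun u => intensity μ u
                  - ((∑ ℓ', (k ℓ' : ℝ)) * r u) • (1 : Matrix (Fin J) (Fin J) ℝ)) s x
                * Rmat μ bt bs ℓ x * V (k - Pi.single ℓ 1) x)
          + ∑ y ∈ (Sfin k).filter (fun y => ¬ ∃ ℓ, y = Pi.single ℓ 1),
              (∏ ℓ, ((k ℓ).choose (y ℓ) : ℝ)) •
                ∫ x in s..t,
                  peanoBaker (fun u => intensity μ u
                      - ((∑ ℓ', (k ℓ' : ℝ)) * r u) • (1 : Matrix (Fin J) (Fin J) ℝ)) s x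
                    * Cmat μ bt y x * V (k - y) x :=
  moment_integral_representation_general r μ bt bs hr hμc hbtc hbsc t k hk V hode hterm
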